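/- If G ≜ H, then for every game K, G : K ≜ H : K and K : G ≜ K : H. -/

import Mathlib

namespace SetTheory

/-- Pre-games (ported: Mathlib's `SetTheory.PGame` no longer exists). -/
inductive PGame.{w} : Type (w + 1)
  | mk : ∀ α β : Type w, (α → PGame) → (β → PGame) → PGame

namespace PGame

def LeftMoves.{w} : PGame.{w} → Type w
  | mk l _ _ _ => l

def RightMoves.{w} : PGame.{w} → Type w
  | mk _ r _ _ => r

def moveLeft.{w} : (g : PGame.{w}) → LeftMoves g → PGame.{w}
  | mk _ _ L _ => L

def moveRight.{w} : (g : PGame.{w}) → RightMoves g → PGame.{w}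
  | mk _ _ _ R => R

/-- `leAux x y = (x ≤ y, y ≤ x)`, by simultaneous structural recursion. -/
noncomputable def leAux.{w} (x : PGame.{w}) : PGame.{w} → Prop × Prop :=
  PGame.rec (motive := fun _ => PGame.{w} → Prop × Prop)
    (fun _ _ _ _ IHL IHR y =>
      PGame.rec (motive := fun _ => Prop × Prop)
        (fun yl yr yL yR JL JR =>
          ((∀ i, ¬ (IHL i (mk yl yr yL yR)).2) ∧ (∀ j, ¬ (JR j).2),
           (∀ i, ¬ (JL i).1) ∧ (∀ j, ¬ (IHR j (mk yl yr yL yR)).1)))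
        y) x

instance instLE.{w} : LE PGame.{w} := ⟨fun x y => (leAux x y).1⟩

theorem leAux_mk.{w} (xl xr : Type w) (xL : xl → PGame.{w}) (xR : xr → PGame.{w})
    (yl yr : Type w) (yL : yl → PGame.{w}) (yR : yr → PGame.{w}) :
    leAux (mk xl xr xL xR) (mk yl yr yL yR) =
      ((∀ i, ¬ (leAux (xL i) (mk yl yr yL yR)).2) ∧ (∀ j, ¬ (leAux (mk xl xr xL xR) (yR j)).2),
       (∀ i, ¬ (leAux (mk xl xr xL xR) (yL i)).1) ∧ (∀ j, ¬ (leAux (xR j) (mk yl yr yL yR)).1)) :=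
  rfl

theorem leAux_swap.{w} (x y : PGame.{w}) :
    (leAux x y).2 = (leAux y x).1 ∧ (leAux x y).1 = (leAux y x).2 := by
  induction x generalizing y with
  | mk xl xr xL xR IHL IHR =>
    induction y with
    | mk yl yr yL yR JL JR =>
      have h1 : ∀ i, (leAux (mk xl xr xL xR) (yL i)).1 = (leAux (yL i) (mk xl xr xL xR)).2 :=
        fun i => (JL i).2
      have h2 : ∀ i, (leAux (mk xl xr xL xR) (yR i)).2 = (leAux (yR i) (mk xl xr xL xR)).1 :=
        fun i => (JR i).1
      have h3 : ∀ i, (leAux (xL i) (mk yl yr yL yR)).2 = (leAux (mk yl yr yL yR) (xL i)).1 :=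
        fun i => (IHL i _).1
      have h4 : ∀ i, (leAux (xR i) (mk yl yr yL yR)).1 = (leAux (mk yl yr yL yR) (xR i)).2 :=
        fun i => (IHR i _).2
      rw [leAux_mk, leAux_mk]
      constructor <;> simp only [h1, h2, h3, h4]

theorem le_iff.{w} (x y : PGame.{w}) :
    x ≤ y ↔ (∀ i, ¬ y ≤ x.moveLeft i) ∧ ∀ j, ¬ y.moveRight j ≤ x := by
  cases x
  cases y
  show (leAux _ _).1 ↔ _
  rw [leAux_mk]
  have h : ∀ a b : PGame.{w}, (leAux a b).2 = (leAux b a).1 := fun a b => (leAux_swap a b).1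
  simp only [h]
  exact Iff.rfl

theorem le_refl'.{w} (x : PGame.{w}) : x ≤ x := by
  induction x with
  | mk xl xr xL xR IHL IHR =>
    refine (le_iff _ _).2 ⟨fun i h => ?_, fun j h => ?_⟩
    · exact ((le_iff _ _).1 h).1 i (IHL i)
    · exact ((le_iff _ _).1 h).2 j (IHR j)

theorem le_trans_aux.{w} (x y z : PGame.{w}) :
    (x ≤ y → y ≤ z → x ≤ z) ∧ (y ≤ z → z ≤ x → y ≤ x) ∧ (z ≤ x → x ≤ y → z ≤ y) := by
  induction x generalizing y z with
  | mk xl xr xL xR IHxl IHxr =>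
  induction y generalizing z with
  | mk yl yr yL yR IHyl IHyr =>
  induction z with
  | mk zl zr zL zR IHzl IHzr =>
  refine ⟨fun h1 h2 => ?_, fun h1 h2 => ?_, fun h1 h2 => ?_⟩
  · refine (le_iff _ _).2 ⟨fun i h => ?_, fun k h => ?_⟩
    · exact ((le_iff _ _).1 h1).1 i ((IHxl i _ _).2.1 h2 h)
    · exact ((le_iff _ _).1 h2).2 k ((IHzr k).2.2 h h1)
  · refine (le_iff _ _).2 ⟨fun i h => ?_, fun k h => ?_⟩
    · exact ((le_iff _ _).1 h1).1 i ((IHyl i _).2.2 h2 h)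
    · exact ((le_iff _ _).1 h2).2 k ((IHxr k _ _).1 h h1)
  · refine (le_iff _ _).2 ⟨fun i h => ?_, fun k h => ?_⟩
    · exact ((le_iff _ _).1 h1).1 i ((IHzl i).1 h2 h)
    · exact ((le_iff _ _).1 h2).2 k ((IHyr k _).2.1 h h1)

theorem le_trans'.{w} {x y z : PGame.{w}} (h1 : x ≤ y) (h2 : y ≤ z) : x ≤ z :=
  (le_trans_aux x y z).1 h1 h2

theorem lf_of_le_moveLeft.{w} {a b : PGame.{w}} {i : b.LeftMoves} (h : a ≤ b.moveLeft i) :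
    ¬ b ≤ a := fun h' => ((le_iff _ _).1 h').1 i h

theorem lf_of_moveRight_le.{w} {a b : PGame.{w}} {j : a.RightMoves} (h : a.moveRight j ≤ b) :
    ¬ b ≤ a := fun h' => ((le_iff _ _).1 h').2 j h

theorem not_le_iff.{w} (x y : PGame.{w}) :
    ¬ y ≤ x ↔ (∃ i, x ≤ y.moveLeft i) ∨ ∃ j, x.moveRight j ≤ y := by
  rw [le_iff y x]
  simp only [not_and_or, not_forall, not_not]

instance setoid.{w} : Setoid PGame.{w} :=
  ⟨fun x y => x ≤ y ∧ y ≤ x,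
    ⟨fun x => ⟨le_refl' x, le_refl' x⟩, fun h => ⟨h.2, h.1⟩,
      fun h1 h2 => ⟨le_trans' h1.1 h2.1, le_trans' h2.2 h1.2⟩⟩⟩

instance instZero.{w} : Zero PGame.{w} := ⟨⟨PEmpty, PEmpty, PEmpty.elim, PEmpty.elim⟩⟩

instance instOne.{w} : One PGame.{w} := ⟨⟨PUnit, PEmpty, fun _ => 0, PEmpty.elim⟩⟩

def neg.{w} : PGame.{w} → PGame.{w}
  | mk l r L R => mk r l (fun i => neg (R i)) (fun i => neg (L i))

instance instNeg.{w} : Neg PGame.{w} := ⟨neg⟩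

/-- Auxiliary for `add`: recursion on the second summand. -/
def addAux.{w} (xl xr : Type w) (IHL : xl → PGame.{w} → PGame.{w})
    (IHR : xr → PGame.{w} → PGame.{w}) : PGame.{w} → PGame.{w}
  | mk yl yr yL yR =>
    mk (xl ⊕ yl) (xr ⊕ yr)
      (Sum.elim (fun i => IHL i (mk yl yr yL yR)) (fun j => addAux xl xr IHL IHR (yL j)))
      (Sum.elim (fun i => IHR i (mk yl yr yL yR)) (fun j => addAux xl xr IHL IHR (yR j)))

/-- Sum of pre-games: `x + y = ⟨xL + y, x + yL | xR + y, x + yR⟩`. -/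
def add.{w} : PGame.{w} → PGame.{w} → PGame.{w}
  | mk xl xr xL xR => addAux xl xr (fun i => add (xL i)) (fun i => add (xR i))

instance instAdd.{w} : Add PGame.{w} := ⟨add⟩

theorem neg_le_neg_aux.{w} (x y : PGame.{w}) :
    (neg y ≤ neg x ↔ x ≤ y) ∧ (neg x ≤ neg y ↔ y ≤ x) := by
  induction x generalizing y with
  | mk xl xr xL xR IHL IHR =>
  induction y with
  | mk yl yr yL yR JL JR =>
  refine ⟨⟨fun h => ?_, fun h => ?_⟩, ⟨fun h => ?_, fun h => ?_⟩⟩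
  · refine (le_iff _ _).2 ⟨fun i hi => ?_, fun j hj => ?_⟩
    · exact ((le_iff _ _).1 h).2 i ((IHL i _).2.2 hi)
    · exact ((le_iff _ _).1 h).1 j ((JR j).2.2 hj)
  · refine (le_iff _ _).2 ⟨fun i hi => ?_, fun j hj => ?_⟩
    · exact ((le_iff _ _).1 h).2 i ((JR i).2.1 hi)
    · exact ((le_iff _ _).1 h).1 j ((IHL j _).2.1 hj)
  · refine (le_iff _ _).2 ⟨fun i hi => ?_, fun j hj => ?_⟩
    · exact ((le_iff _ _).1 h).2 i ((JL i).1.2 hi)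
    · exact ((le_iff _ _).1 h).1 j ((IHR j _).1.2 hj)
  · refine (le_iff _ _).2 ⟨fun i hi => ?_, fun j hj => ?_⟩
    · exact ((le_iff _ _).1 h).2 i ((IHR i _).1.1 hi)
    · exact ((le_iff _ _).1 h).1 j ((JL j).1.1 hj)

theorem add_le_add_right_aux.{w} (x y z : PGame.{w}) :
    (x ≤ y → add x z ≤ add y z) ∧ (¬ y ≤ x → ¬ add y z ≤ add x z) := by
  induction x generalizing y z with
  | mk xl xr xL xR IHxl IHxr =>
  induction y generalizing z with
  | mk yl yr yL yR IHyl IHyr =>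
  induction z with
  | mk zl zr zL zR IHzl IHzr =>
  refine ⟨fun h => ?_, fun h => ?_⟩
  · refine (le_iff _ _).2 ⟨fun i => ?_, fun j => ?_⟩
    · rcases i with a | c
      · exact (IHxl a _ _).2 (((le_iff _ _).1 h).1 a)
      · exact lf_of_le_moveLeft (i := Sum.inr c) ((IHzl c).1 h)
    · rcases j with b | c
      · exact (IHyr b _).2 (((le_iff _ _).1 h).2 b)
      · exact lf_of_moveRight_le (j := Sum.inr c) ((IHzr c).1 h)
  · rcases (not_le_iff _ _).1 h with ⟨i, hi⟩ | ⟨j, hj⟩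
    · exact lf_of_le_moveLeft (i := Sum.inl i) ((IHyl i _).1 hi)
    · exact lf_of_moveRight_le (j := Sum.inl j) ((IHxr j _ _).1 hj)

theorem add_le_add_left_aux.{w} (x y z : PGame.{w}) :
    (x ≤ y → add z x ≤ add z y) ∧ (¬ y ≤ x → ¬ add z y ≤ add z x) := by
  induction x generalizing y z with
  | mk xl xr xL xR IHxl IHxr =>
  induction y generalizing z with
  | mk yl yr yL yR IHyl IHyr =>
  induction z with
  | mk zl zr zL zR IHzl IHzr =>
  refine ⟨fun h => ?_, fun h => ?_⟩
  · refine (le_iff _ _).2 ⟨fun i => ?_, fun j => ?_⟩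
    · rcases i with c | a
      · exact lf_of_le_moveLeft (i := Sum.inl c) ((IHzl c).1 h)
      · exact (IHxl a _ (mk zl zr zL zR)).2 (((le_iff _ _).1 h).1 a)
    · rcases j with c | b
      · exact lf_of_moveRight_le (j := Sum.inl c) ((IHzr c).1 h)
      · exact (IHyr b (mk zl zr zL zR)).2 (((le_iff _ _).1 h).2 b)
  · rcases (not_le_iff _ _).1 h with ⟨i, hi⟩ | ⟨j, hj⟩
    · exact lf_of_le_moveLeft (i := Sum.inr i) ((IHyl i (mk zl zr zL zR)).1 hi)
    · exact lf_of_moveRight_le (j := Sum.inr j) ((IHxr j _ (mk zl zr zL zR)).1 hj)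

/-- `powHalf n` is the pre-game `1 / 2 ^ n`. -/
def powHalf.{w} : ℕ → PGame.{w}
  | 0 => 1
  | n + 1 => ⟨PUnit, PUnit, 0, fun _ => powHalf n⟩

end PGame

/-- Games: pre-games modulo equivalence. -/
abbrev Game.{w} := Quotient PGame.setoid.{w}

namespace Game

instance instZero.{w} : Zero Game.{w} := ⟨⟦0⟧⟩

instance instNeg.{w} : Neg Game.{w} :=
  ⟨Quotient.map PGame.neg fun x y h =>
    ⟨(PGame.neg_le_neg_aux x y).2.2 h.2, (PGame.neg_le_neg_aux x y).1.2 h.1⟩⟩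

instance instAdd.{w} : Add Game.{w} :=
  ⟨Quotient.map₂ PGame.add fun a₁ a₂ ha b₁ b₂ hb =>
    ⟨PGame.le_trans' ((PGame.add_le_add_right_aux a₁ a₂ b₁).1 ha.1)
        ((PGame.add_le_add_left_aux b₁ b₂ a₂).1 hb.1),
      PGame.le_trans' ((PGame.add_le_add_right_aux a₂ a₁ b₂).1 ha.2)
        ((PGame.add_le_add_left_aux b₂ b₁ a₁).1 hb.2)⟩⟩

/-- Integer multiples, as in Mathlib's former `AddCommGroup Game` (`zsmul := zsmulRec`). -/
instance instSMulInt.{w} : SMul ℤ Game.{w} := ⟨zsmulRec⟩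

end Game

end SetTheory

open SetTheory PGame

universe u

/-- Ordinal sum `G : H`: players may move in the base `G` (ending all play in the
subordinate) or in the subordinate `H`. -/
def ordinalSum (G : PGame.{u}) : PGame.{u} → PGame.{u}
  | ⟨yl, yr, yL, yR⟩ =>
    ⟨G.LeftMoves ⊕ yl, G.RightMoves ⊕ yr,
     Sum.elim G.moveLeft fun j => ordinalSum G (yL j),
     Sum.elim G.moveRight fun j => ordinalSum G (yR j)⟩

/-- `G ≜ H`: equivalence modulo domination.  Every Left option of `G` is `≤` some Left
option of `H`, every Left option of `H` is `≤` some Left option of `G`, every Right option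
of `G` is `≥` some Right option of `H`, and every Right option of `H` is `≥` some Right
option of `G`. -/
def EquivDom (G H : PGame) : Prop :=
  (∀ i, ∃ j, G.moveLeft i ≤ H.moveLeft j) ∧
  (∀ j, ∃ i, H.moveLeft j ≤ G.moveLeft i) ∧
  (∀ i, ∃ j, H.moveRight j ≤ G.moveRight i) ∧
  (∀ j, ∃ i, G.moveRight i ≤ H.moveRight j)

/-- The ball `⟨a | b⟩`: the game with exactly one Left option `a` and exactly one Right
option `b`. -/
def ball (a b : PGame.{u}) : PGame.{u} :=
  ⟨PUnit, PUnit, fun _ => a, fun _ => b⟩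

/-- The canonical form of a natural number: `0 ≅ ⟨ | ⟩` and `n+1 ≅ ⟨n | ⟩`. -/
def canonNat : ℕ → PGame
  | 0 => 0
  | n + 1 => ⟨PUnit, PEmpty, fun _ => canonNat n, PEmpty.elim⟩

/-- The canonical form of an integer: for `n ≥ 0` it is `canonNat n`, and the canonical
form of a negative integer is the negative of the canonical form of its absolute value. -/
def canonInt (n : ℤ) : PGame :=
  if 0 ≤ n then canonNat n.toNat else -canonNat (-n).toNat

/-- The game value of the dyadic rational `a / 2 ^ q`. -/
def dyadicVal (a : ℤ) (q : ℕ) : Game :=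
  a • (⟦powHalf q⟧ : Game)

/-! The ordinal sum `G : K` is `G` with the options of `K`, each prefixed by `G :`, added to
its own. With a common subordinate `K`, the base options of `G` and `H` are matched by `G ≜ H`
and the remaining ones by `G : X ≤ H : X`, which holds because the options of `G` are dominated
by those of `H`. With a common base `K`, `G ≜ H` is carried along by the monotone map
`X ↦ K : X`. -/

theorem Sum.forall_exists_elim {α β γ δ ε ζ : Type*} {r : ε → ζ → Prop}
    {f : α → ε} {g : β → ε} {f' : γ → ζ} {g' : δ → ζ}
    (hf : ∀ i, ∃ j, r (f i) (f' j)) (hg : ∀ i, ∃ j, r (g i) (g' j)) :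
    ∀ i, ∃ j, r (Sum.elim f g i) (Sum.elim f' g' j)
  | .inl i => let ⟨j, h⟩ := hf i; ⟨.inl j, h⟩
  | .inr i => let ⟨j, h⟩ := hg i; ⟨.inr j, h⟩

namespace SetTheory.PGame

theorem le_of_forall_exists_le {x y : PGame.{u}}
    (hl : ∀ i, ∃ j, x.moveLeft i ≤ y.moveLeft j)
    (hr : ∀ j, ∃ i, x.moveRight i ≤ y.moveRight j) : x ≤ y := by
  refine (le_iff x y).2 ⟨fun i hyx => ?_, fun j hyx => ?_⟩
  · obtain ⟨j, hj⟩ := hl i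
    exact lf_of_le_moveLeft hj hyx
  · obtain ⟨i, hi⟩ := hr j
    exact lf_of_moveRight_le hi hyx

def union (x y : PGame.{u}) : PGame.{u} :=
  mk (x.LeftMoves ⊕ y.LeftMoves) (x.RightMoves ⊕ y.RightMoves)
    (Sum.elim x.moveLeft y.moveLeft) (Sum.elim x.moveRight y.moveRight)

def mapOptions (f : PGame.{u} → PGame.{u}) (x : PGame.{u}) : PGame.{u} :=
  mk x.LeftMoves x.RightMoves (f ∘ x.moveLeft) (f ∘ x.moveRight)

end SetTheory.PGame

theorem ordinalSum_eq_union (G K : PGame.{u}) :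
    ordinalSum G K = union G (mapOptions (ordinalSum G) K) := by
  cases K; rfl

theorem ordinalSum_le_ordinalSum_right_aux (K A B : PGame.{u}) :
    (A ≤ B → ordinalSum K A ≤ ordinalSum K B) ∧
      (¬ B ≤ A → ¬ ordinalSum K B ≤ ordinalSum K A) := by
  induction A generalizing B with
  | mk al ar aL aR IHal IHar =>
  induction B with
  | mk bl br bL bR IHbl IHbr =>
  refine ⟨fun h => (le_iff _ _).2 ⟨?_, ?_⟩, fun h => ?_⟩
  · rintro (i | i)
    · exact lf_of_le_moveLeft (i := Sum.inl i) (le_refl' _)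
    · exact (IHal i _).2 (((le_iff _ _).1 h).1 i)
  · rintro (j | j)
    · exact lf_of_moveRight_le (j := Sum.inl j) (le_refl' _)
    · exact (IHbr j).2 (((le_iff _ _).1 h).2 j)
  · rcases (not_le_iff _ _).1 h with ⟨i, hi⟩ | ⟨j, hj⟩
    · exact lf_of_le_moveLeft (i := Sum.inr i) ((IHbl i).1 hi)
    · exact lf_of_moveRight_le (j := Sum.inr j) ((IHar j _).1 hj)

theorem ordinalSum_le_ordinalSum_right (K : PGame.{u}) {A B : PGame.{u}} (h : A ≤ B) :
    ordinalSum K A ≤ ordinalSum K B :=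
  (ordinalSum_le_ordinalSum_right_aux K A B).1 h

theorem ordinalSum_le_ordinalSum_left {A B : PGame.{u}}
    (hl : ∀ i, ∃ j, A.moveLeft i ≤ B.moveLeft j)
    (hr : ∀ j, ∃ i, A.moveRight i ≤ B.moveRight j) (K : PGame.{u}) :
    ordinalSum A K ≤ ordinalSum B K := by
  induction K with
  | mk kl kr kL kR IHl IHr =>
  refine le_of_forall_exists_le ?_ ?_
  · rintro (i | k)
    · obtain ⟨j, hj⟩ := hl i
      exact ⟨Sum.inl j, hj⟩
    · exact ⟨Sum.inr k, IHl k⟩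
  · rintro (j | k)
    · obtain ⟨i, hi⟩ := hr j
      exact ⟨Sum.inl i, hi⟩
    · exact ⟨Sum.inr k, IHr k⟩

namespace EquivDom

theorem refl (G : PGame.{u}) : EquivDom G G :=
  ⟨fun i => ⟨i, le_refl' _⟩, fun i => ⟨i, le_refl' _⟩,
    fun j => ⟨j, le_refl' _⟩, fun j => ⟨j, le_refl' _⟩⟩

theorem union {G H G' H' : PGame.{u}} (h : EquivDom G H) (h' : EquivDom G' H') :
    EquivDom (union G G') (union H H') :=
  ⟨Sum.forall_exists_elim h.1 h'.1, Sum.forall_exists_elim h.2.1 h'.2.1,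
    Sum.forall_exists_elim (r := fun a b => b ≤ a) h.2.2.1 h'.2.2.1,
    Sum.forall_exists_elim (r := fun a b => b ≤ a) h.2.2.2 h'.2.2.2⟩

theorem mapOptions {G H : PGame.{u}} {f g : PGame.{u} → PGame.{u}}
    (hfg : ∀ x y, x ≤ y → f x ≤ g y) (hgf : ∀ x y, x ≤ y → g x ≤ f y)
    (h : EquivDom G H) :
    EquivDom (mapOptions f G) (mapOptions g H) :=
  ⟨fun i => (h.1 i).imp fun _ => hfg _ _, fun j => (h.2.1 j).imp fun _ => hgf _ _,
    fun i => (h.2.2.1 i).imp fun _ => hgf _ _, fun j => (h.2.2.2 j).imp fun _ => hfg _ _⟩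

end EquivDom

/-- If `G ≜ H` then `G : K ≜ H : K` and `K : G ≜ K : H` for every game `K`. -/
theorem equivDom_ordinalSum (G H : PGame) (h : EquivDom G H) (K : PGame) :
    EquivDom (ordinalSum G K) (ordinalSum H K) ∧
    EquivDom (ordinalSum K G) (ordinalSum K H) := by
  have hGH : ∀ x y, x ≤ y → ordinalSum G x ≤ ordinalSum H y := fun _ y hxy =>
    le_trans' (ordinalSum_le_ordinalSum_right G hxy)
      (ordinalSum_le_ordinalSum_left h.1 h.2.2.2 y)
  have hHG : ∀ x y, x ≤ y → ordinalSum H x ≤ ordinalSum G y := fun _ y hxy =>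
    le_trans' (ordinalSum_le_ordinalSum_right H hxy)
      (ordinalSum_le_ordinalSum_left h.2.1 h.2.2.1 y)
  have hK : ∀ x y, x ≤ y → ordinalSum K x ≤ ordinalSum K y := fun _ _ =>
    ordinalSum_le_ordinalSum_right K
  constructor
  · rw [ordinalSum_eq_union G K, ordinalSum_eq_union H K]
    exact h.union ((EquivDom.refl K).mapOptions hGH hHG)
  · rw [ordinalSum_eq_union K G, ordinalSum_eq_union K H]
    exact (EquivDom.refl K).union (h.mapOptions hK hK)
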